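/- With notation as in the nearest-integer continued fraction of an irrational α: for all n ≥ −1, α_{n+1} = ∏_{i=c(n)+1}^{c(n+1)} α̃_i, and consequently β_n = ∏_{m=0}^{n} α_m equals β̃_{c(n)} = ∏_{i=0}^{c(n)} α̃_i. -/

import Mathlib

/-- Distance to the nearest integer. -/
noncomputable def dZ (x : ℝ) : ℝ := |x - round x|

/-- The nearest-integer (modified) continued fraction entries `α_n`. -/
noncomputable def nicf (α : ℝ) : ℕ → ℝ
  | 0 => dZ α
  | n + 1 => dZ (1 / nicf α n)

/-- The signs `ε_n` of the nearest-integer continued fraction. -/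
noncomputable def eps (α : ℝ) : ℕ → ℤ
  | 0 => if 0 < α - round α then 1 else -1
  | n + 1 => if 0 < 1 / nicf α n - round (1 / nicf α n) then 1 else -1

/-- The standard continued fraction entries `α̃_n`. -/
noncomputable def scf (α : ℝ) : ℕ → ℝ
  | 0 => Int.fract α
  | n + 1 => Int.fract (1 / scf α n)

/-- `dfun α m = c(m-1) + 1` where `c` is the index-matching sequence,
`c(-1) = -1`, `c(n) = -1 + ∑_{i=0}^{n} (3 - ε_i)/2`. -/
noncomputable def dfun (α : ℝ) : ℕ → ℕ
  | 0 => 0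
  | m + 1 => dfun α m + (if eps α m = 1 then 1 else 2)

lemma dZ_lt_half (x : ℝ) (hx : Irrational x) : dZ x < 1/2 := by
  refine lt_of_le_of_ne (abs_sub_round x) ?_
  intro h
  rcases abs_eq (by norm_num : (0:ℝ) ≤ 1/2) |>.mp h with h' | h'
  · exact hx ⟨(round x : ℚ) + 1/2, by push_cast; linarith⟩
  · exact hx ⟨(round x : ℚ) - 1/2, by push_cast; linarith⟩

lemma dZ_prop (x : ℝ) (hx : Irrational x) :
    Irrational (dZ x) ∧ 0 < dZ x ∧ dZ x < 1/2 := by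
  have hsub : Irrational (x - round x) := hx.sub_intCast _
  refine ⟨?_, abs_pos.mpr (sub_ne_zero.mpr (hx.ne_int _)), dZ_lt_half x hx⟩
  unfold dZ
  rcases abs_cases (x - (round x : ℝ)) with ⟨h, _⟩ | ⟨h, _⟩
  · rwa [h]
  · rw [h]; exact hsub.neg

lemma nicf_prop (α : ℝ) (hα : Irrational α) (m : ℕ) :
    Irrational (nicf α m) ∧ 0 < nicf α m ∧ nicf α m < 1/2 := by
  induction m with
  | zero => exact dZ_prop α hα
  | succ n ih =>
    have h1 : Irrational (1 / nicf α n) := by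
      rw [one_div]; exact ih.1.inv
    exact dZ_prop _ h1

lemma fract_eq_dZ (x : ℝ) (hx : Irrational x) :
    Int.fract x = if 0 < x - round x then dZ x else 1 - dZ x := by
  have hlt := dZ_lt_half x hx
  have hne : x - round x ≠ 0 := sub_ne_zero.mpr (hx.ne_int _)
  unfold dZ at *
  rcases abs_lt.mp hlt with ⟨hl, hr⟩
  split_ifs with h
  · have hf : ⌊x⌋ = round x := Int.floor_eq_iff.mpr ⟨by linarith, by push_cast; linarith⟩
    rw [Int.fract, hf, abs_of_pos h]
  · have h' : x - round x < 0 := lt_of_le_of_ne (not_lt.mp h) hne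
    have hf : ⌊x⌋ = round x - 1 := Int.floor_eq_iff.mpr ⟨by push_cast; linarith, by push_cast; linarith⟩
    rw [Int.fract, hf, abs_of_neg h']
    push_cast
    ring

lemma scf_step1 (α : ℝ) (β : ℝ) (h0 : 0 < β) (h2 : β < 1/2) (d : ℕ)
    (hd : scf α d = 1 - β) : scf α (d + 1) = β / (1 - β) := by
  have hb1 : (0:ℝ) < 1 - β := by linarith
  have h1 : (1:ℝ) < 1 / (1 - β) := by rw [lt_div_iff₀ hb1]; linarith
  have h2' : 1 / (1 - β) < 2 := by rw [div_lt_iff₀ hb1]; linarith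
  have hf : ⌊1 / (1 - β)⌋ = 1 := Int.floor_eq_iff.mpr ⟨by push_cast; linarith, by push_cast; linarith⟩
  show Int.fract (1 / scf α d) = _
  rw [hd, Int.fract, hf]
  push_cast
  field_simp
  ring

lemma scf_step2 (α : ℝ) (β : ℝ) (h0 : 0 < β) (h2 : β < 1/2) (d : ℕ)
    (hd : scf α d = 1 - β) : scf α (d + 2) = Int.fract (1 / β) := by
  have hb1 : (0:ℝ) < 1 - β := by linarith
  have h1 := scf_step1 α β h0 h2 d hd
  show Int.fract (1 / scf α (d+1)) = _
  rw [h1, one_div_div]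
  have : (1 - β) / β = 1 / β - (1:ℤ) := by push_cast; field_simp
  rw [this, Int.fract_sub_intCast]

lemma key (α : ℝ) (hα : Irrational α) (m : ℕ) :
    scf α (dfun α m) = if eps α m = 1 then nicf α m else 1 - nicf α m := by
  induction m with
  | zero =>
    have h := fract_eq_dZ α hα
    show Int.fract α = _
    by_cases hc : 0 < α - ↑(round α) <;>
      simp [eps, nicf, h, hc]
  | succ n ih =>
    obtain ⟨hirr, h0, h2⟩ := nicf_prop α hα n
    have hirr1 : Irrational (1 / nicf α n) := by rw [one_div]; exact hirr.inv
    have hfr := fract_eq_dZ _ hirr1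
    have hnext : scf α (dfun α (n+1)) = Int.fract (1 / nicf α n) := by
      by_cases hc : eps α n = 1
      · have hdd : dfun α (n+1) = dfun α n + 1 := by simp [dfun, hc]
        rw [hdd]
        show Int.fract (1 / scf α (dfun α n)) = _
        rw [ih]; simp [hc]
      · have hdd : dfun α (n+1) = dfun α n + 2 := by simp [dfun, hc]
        rw [hdd]
        exact scf_step2 α (nicf α n) h0 h2 _ (by rw [ih]; simp [hc])
    rw [hnext, hfr]
    by_cases hc : 0 < 1 / nicf α n - ↑(round (1 / nicf α n)) <;>
      simp [eps, nicf, hc]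

theorem stmt_14 (α : ℝ) (hα : Irrational α) :
    (∀ m : ℕ, nicf α m = ∏ i ∈ Finset.Ico (dfun α m) (dfun α (m + 1)), scf α i) ∧
    (∀ n : ℕ, ∏ m ∈ Finset.range (n + 1), nicf α m =
      ∏ i ∈ Finset.range (dfun α (n + 1)), scf α i) := by
  have part1 : ∀ m : ℕ, nicf α m = ∏ i ∈ Finset.Ico (dfun α m) (dfun α (m + 1)), scf α i := by
    intro m
    obtain ⟨hirr, h0, h2⟩ := nicf_prop α hα m
    have hk := key α hα m
    by_cases hc : eps α m = 1
    · have hdd : dfun α (m+1) = dfun α m + 1 := by simp [dfun, hc]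
      rw [hdd, Nat.Ico_succ_singleton, Finset.prod_singleton, hk]
      simp [hc]
    · have hdd : dfun α (m+1) = dfun α m + 2 := by simp [dfun, hc]
      have hk' : scf α (dfun α m) = 1 - nicf α m := by rw [hk]; simp [hc]
      have h1 := scf_step1 α (nicf α m) h0 h2 _ hk'
      rw [hdd, show dfun α m + 2 = (dfun α m + 1) + 1 from rfl,
        Finset.prod_Ico_succ_top (Nat.le_succ _), Nat.Ico_succ_singleton,
        Finset.prod_singleton, hk', h1,
        mul_div_cancel₀ _ (by linarith : (1:ℝ) - nicf α m ≠ 0)]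
  refine ⟨part1, ?_⟩
  intro n
  induction n with
  | zero =>
    have h0 := part1 0
    simp only [show dfun α 0 = 0 from rfl] at h0
    rw [Finset.prod_range_one, h0, Finset.range_eq_Ico]
  | succ k ih =>
    have hmono : dfun α (k+1) ≤ dfun α (k+2) := by
      show dfun α (k+1) ≤ dfun α (k+1) + _
      split_ifs <;> omega
    rw [Finset.prod_range_succ, ih, part1 (k+1), Finset.range_eq_Ico]
    rw [Finset.range_eq_Ico]
    exact Finset.prod_Ico_consecutive (scf α) (Nat.zero_le _) hmono
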